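/- arXiv:2006.00462 — 4 statements merged into one kernel-verified Lean document; each statement's English description precedes it below -/
import Mathlib

section
/- Let X be a normed space, let φ, ψ : X → (-∞,∞] with x̄ ∈ dom φ ∩ dom ψ, and assume both φ and ψ are relatively Lipschitz continuous around x̄ with respect to their domains and are epi-differentiable at x̄. Suppose that either (i) the tangential qualification condition T_{dom φ ∩ dom ψ}(x̄) = T_{dom φ}(x̄) ∩ T_{dom ψ}(x̄) holds, or (ii) there exist κ > 0 and a neighborhood U of x̄ such that dist(x; dom φ ∩ dom ψ) ≤ κ(dist(x; dom φ) + dist(x; dom ψ)) for all x ∈ U. Then d(φ+ψ)(x̄)(u) = dφ(x̄)(u) + dψ(x̄)(u) for all u ∈ X; furthermore, in case (ii) the sum φ+ψ is epi-differentiable at x̄. -/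
open Filter Topology Set Metric Pointwise

noncomputable section

variable {E : Type*} [NormedAddCommGroup E] [NormedSpace ℝ E]

/-- Bouligand–Severi contingent tangent cone. -/
def contTangent (Ω : Set E) (x : E) : Set E :=
  {u | ∃ t : ℕ → ℝ, ∃ v : ℕ → E,
    (∀ k, 0 < t k) ∧ Tendsto t atTop (𝓝 0) ∧ Tendsto v atTop (𝓝 u) ∧
    ∀ k, x + t k • v k ∈ Ω}

/-- Dini–Hadamard subnormal cone. -/
def subNormal (Ω : Set E) (x : E) : Set (E →L[ℝ] ℝ) :=
  {v | ∀ u ∈ contTangent Ω x, v u ≤ 0}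

/-- Normal cone of convex analysis. -/
def convNormal (Θ : Set E) (y : E) : Set (E →L[ℝ] ℝ) :=
  {l | ∀ z ∈ Θ, l (z - y) ≤ 0}

/-- Difference quotient of an extended-real-valued function. -/
def diffQuot (φ : E → EReal) (x : E) (t : ℝ) (u : E) : EReal :=
  ((t⁻¹ : ℝ) : EReal) * (φ (x + t • u) - φ x)

/-- Dini–Hadamard subderivative. -/
def subDeriv (φ : E → EReal) (x : E) (u : E) : EReal :=
  Filter.liminf (fun p : ℝ × E => diffQuot φ x p.1 p.2) ((𝓝[>] (0:ℝ)) ×ˢ 𝓝 u)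

/-- Dini–Hadamard subdifferential. -/
def subDiff (φ : E → EReal) (x : E) : Set (E →L[ℝ] ℝ) :=
  {v | ∀ u, (v u : EReal) ≤ subDeriv φ x u}

/-- Proper extended-real-valued function. -/
def properFun (ψ : E → EReal) : Prop := (∀ u, ψ u ≠ ⊥) ∧ ∃ u, ψ u ≠ ⊤

def epiSet (g : E → EReal) : Set (E × ℝ) := {p | g p.1 ≤ (p.2 : EReal)}

/-- Painlevé–Kuratowski sequential outer limit as t ↓ 0. -/
def outerLim {α : Type*} [TopologicalSpace α] (S : ℝ → Set α) : Set α :=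
  {z | ∃ t : ℕ → ℝ, ∃ w : ℕ → α, (∀ k, 0 < t k) ∧ Tendsto t atTop (𝓝 0) ∧
    Tendsto w atTop (𝓝 z) ∧ ∀ k, w k ∈ S (t k)}

/-- Painlevé–Kuratowski sequential inner limit as t ↓ 0. -/
def innerLim {α : Type*} [TopologicalSpace α] (S : ℝ → Set α) : Set α :=
  {z | ∀ t : ℕ → ℝ, (∀ k, 0 < t k) → Tendsto t atTop (𝓝 0) →
    ∃ w : ℕ → α, Tendsto w atTop (𝓝 z) ∧ ∀ᶠ k in atTop, w k ∈ S (t k)}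

/-- Epi-differentiability at a point. -/
def epiDiffAt (φ : E → EReal) (x : E) : Prop :=
  outerLim (fun t => epiSet (fun u => diffQuot φ x t u)) = epiSet (subDeriv φ x) ∧
  innerLim (fun t => epiSet (fun u => diffQuot φ x t u)) = epiSet (subDeriv φ x)

/-- Relative Lipschitz continuity around x w.r.t. Ω with constant ℓ. -/
def RelLipschitzOn (φ : E → EReal) (Ω : Set E) (x : E) (ℓ : ℝ) : Prop :=
  ∃ U ∈ 𝓝 x, ∀ y ∈ Ω ∩ U, ∀ z ∈ Ω ∩ U, φ y - φ z ≤ ((ℓ * ‖y - z‖ : ℝ) : EReal)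

def RelLipschitzAround (φ : E → EReal) (Ω : Set E) (x : E) : Prop :=
  ∃ ℓ : ℝ, 0 ≤ ℓ ∧ RelLipschitzOn φ Ω x ℓ

/-- Local Lipschitz continuity of an extended-real-valued function around x (finite nearby). -/
def LocLipschitzAt (φ : E → EReal) (x : E) : Prop :=
  ∃ ℓ : ℝ, ∃ U ∈ 𝓝 x, (∀ z ∈ U, φ z ≠ ⊤) ∧
    ∀ z ∈ U, ∀ w ∈ U, φ z - φ w ≤ ((ℓ * ‖z - w‖ : ℝ) : EReal)

/-- Dini–Hadamard regularity. -/
def DHRegular (φ : E → EReal) (x : E) : Prop :=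
  ∀ u, sSup ((fun v : E →L[ℝ] ℝ => (v u : EReal)) '' subDiff φ x) = subDeriv φ x u

def weakStarClosure (S : Set (E →L[ℝ] ℝ)) : Set (E →L[ℝ] ℝ) :=
  closure (show Set (WeakDual ℝ E) from S)

def IsWeakStarClosed (S : Set (E →L[ℝ] ℝ)) : Prop :=
  IsClosed (show Set (WeakDual ℝ E) from S)

/-!
The inequality `dφ(x̄)(u) + dψ(x̄)(u) ≤ d(φ + ψ)(x̄)(u)` is superadditivity of `liminf`.
For the reverse, take `t_k ↓ 0`. Epi-differentiability supplies directions `w_k → u` along which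
the difference quotients of `φ` are asymptotically at most `dφ(x̄)(u)`; relative Lipschitz
continuity transfers this bound to any directions `v_k → u` with `x̄ + t_k v_k ∈ dom φ`, at the cost
`ℓ ‖v_k - w_k‖ → 0`. The same holds for `ψ`, so it remains to find `v_k → u` with
`x̄ + t_k v_k ∈ dom φ ∩ dom ψ`. Under the tangential condition such `t_k, v_k` exist because
`u ∈ T_{dom φ}(x̄) ∩ T_{dom ψ}(x̄)`. Under the metric condition they exist for every `t_k`, since
`dist(x̄ + t_k u; dom φ ∩ dom ψ) ≤ κ t_k (‖u - w_k^φ‖ + ‖u - w_k^ψ‖) = o(t_k)`; this also gives the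
inner-limit half of the epi-differentiability of `φ + ψ`, the outer-limit half holding for every
function.
-/

section Sequences

variable {α : Type*}

theorem liminf_le_of_tendsto_of_eventually_le {β : Type*} [CompleteLinearOrder β]
    [TopologicalSpace β] [OrderTopology β] {F : Filter α} {f : α → β} {p : ℕ → α}
    (hp : Tendsto p atTop F) {s : ℕ → β} {r : β} (hs : Tendsto s atTop (𝓝 r))
    (hle : ∀ᶠ k in atTop, f (p k) ≤ s k) : F.liminf f ≤ r :=
  calc F.liminf f ≤ atTop.liminf (f ∘ p) := hp.liminf_le_liminf_comp
    _ ≤ atTop.liminf s := liminf_le_liminf hle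
    _ = r := hs.liminf_eq

theorem exists_seq_tendsto_le_of_liminf_le {F : Filter α} [F.IsCountablyGenerated]
    {f : α → EReal} {r : ℝ} (h : F.liminf f ≤ r) {P : α → Prop} (hP : ∀ᶠ a in F, P a) :
    ∃ p : ℕ → α, ∃ s : ℕ → ℝ, Tendsto p atTop F ∧ Tendsto s atTop (𝓝 r) ∧
      ∀ k, P (p k) ∧ f (p k) ≤ s k := by
  obtain ⟨B, hB⟩ := F.exists_antitone_basis
  have hfreq (k : ℕ) : ∃ a ∈ B k, P a ∧ f a < ((r + 1 / (k + 1) : ℝ) : EReal) := by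
    have hlt : F.liminf f < ((r + 1 / (k + 1) : ℝ) : EReal) :=
      h.trans_lt (EReal.coe_lt_coe_iff.mpr (lt_add_of_pos_right r Nat.one_div_pos_of_nat))
    obtain ⟨a, hfa, haB, hPa⟩ :=
      ((frequently_lt_of_liminf_lt (by isBoundedDefault) hlt).and_eventually
        (Filter.Eventually.and (hB.mem k) hP)).exists
    exact ⟨a, haB, hPa, hfa⟩
  choose p hpB hpP hpf using hfreq
  refine ⟨p, _, hB.tendsto hpB, ?_, fun k => ⟨hpP k, (hpf k).le⟩⟩
  simpa using (tendsto_const_nhds (x := r)).add tendsto_one_div_add_atTop_nhds_zero_nat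

theorem innerLim_subset_outerLim [TopologicalSpace α] (S : ℝ → Set α) :
    innerLim S ⊆ outerLim S := by
  intro z hz
  have ht := tendsto_one_div_add_atTop_nhds_zero_nat (𝕜 := ℝ)
  obtain ⟨w, hw, hwS⟩ := hz _ (fun k => Nat.one_div_pos_of_nat) ht
  obtain ⟨N, hN⟩ := eventually_atTop.mp hwS
  exact ⟨fun k => 1 / ((k + N : ℕ) + 1), fun k => w (k + N), fun k => Nat.one_div_pos_of_nat,
    (tendsto_add_atTop_iff_nat N).mpr ht, (tendsto_add_atTop_iff_nat N).mpr hw,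
    fun k => hN _ (Nat.le_add_left N k)⟩

end Sequences

section Directions

variable {X : Type*} [NormedAddCommGroup X] [NormedSpace ℝ X] {x : X}

theorem tendsto_add_smul {ι : Type*} {l : Filter ι} {t : ι → ℝ} {v : ι → X} {u : X}
    (ht : Tendsto t l (𝓝 0)) (hv : Tendsto v l (𝓝 u)) (x : X) :
    Tendsto (fun i => x + t i • v i) l (𝓝 x) := by
  simpa using tendsto_const_nhds.add (ht.smul hv)

theorem infDist_add_smul_le {A : Set X} {t : ℝ} (ht : 0 ≤ t) {w : X} (hw : x + t • w ∈ A)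
    (u : X) : infDist (x + t • u) A ≤ t * ‖u - w‖ :=
  calc infDist (x + t • u) A ≤ dist (x + t • u) (x + t • w) := infDist_le_dist_of_mem hw
    _ = t * ‖u - w‖ := by
      rw [dist_add_left, dist_smul₀, Real.norm_of_nonneg ht, dist_eq_norm]

theorem exists_add_smul_mem_of_infDist_lt {S : Set X} (hS : S.Nonempty) {t δ : ℝ} (ht : 0 < t)
    {u : X} (h : infDist (x + t • u) S < t * δ) : ∃ v, x + t • v ∈ S ∧ ‖v - u‖ < δ := by
  obtain ⟨y, hyS, hy⟩ := (infDist_lt_iff hS).mp h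
  refine ⟨t⁻¹ • (y - x), by rwa [smul_inv_smul₀ ht.ne', add_sub_cancel], ?_⟩
  have hyu : y - (x + t • u) = t • (t⁻¹ • (y - x) - u) := by
    rw [smul_sub, smul_inv_smul₀ ht.ne']; abel
  rw [dist_comm, dist_eq_norm, hyu, norm_smul, Real.norm_of_nonneg ht.le] at hy
  exact lt_of_mul_lt_mul_left hy ht.le

end Directions

section DiffQuot

variable {X : Type*} [NormedAddCommGroup X] [NormedSpace ℝ X] {φ ψ : X → EReal} {x : X}

theorem diffQuot_eq_top (hx : φ x ≠ ⊤) {t : ℝ} (ht : 0 < t) {v : X} (hv : φ (x + t • v) = ⊤) :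
    diffQuot φ x t v = ⊤ := by
  rw [diffQuot, hv, EReal.top_sub hx, EReal.coe_mul_top_of_pos (inv_pos.mpr ht)]

theorem diffQuot_eq_coe (hbot : ∀ y, φ y ≠ ⊥) (hx : φ x ≠ ⊤) {t : ℝ} {v : X}
    (hv : φ (x + t • v) ≠ ⊤) :
    diffQuot φ x t v = ((t⁻¹ * ((φ (x + t • v)).toReal - (φ x).toReal) : ℝ) : EReal) := by
  rw [diffQuot, ← EReal.coe_toReal hv (hbot _), ← EReal.coe_toReal hx (hbot _), ← EReal.coe_sub,
    ← EReal.coe_mul, EReal.toReal_coe, EReal.toReal_coe]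

theorem add_smul_ne_top_of_diffQuot_ne_top (hx : φ x ≠ ⊤) {t : ℝ} (ht : 0 < t) {v : X}
    (h : diffQuot φ x t v ≠ ⊤) : φ (x + t • v) ≠ ⊤ :=
  fun hv => h (diffQuot_eq_top hx ht hv)

theorem diffQuot_add (hφ : φ x ≠ ⊥) (hφ' : φ x ≠ ⊤) (hψ : ψ x ≠ ⊥) (hψ' : ψ x ≠ ⊤) {t : ℝ}
    (ht : 0 ≤ t) (v : X) :
    diffQuot (fun y => φ y + ψ y) x t v = diffQuot φ x t v + diffQuot ψ x t v := by
  lift φ x to ℝ using ⟨hφ', hφ⟩ with a ha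
  lift ψ x to ℝ using ⟨hψ', hψ⟩ with b hb
  have hsplit : φ (x + t • v) + ψ (x + t • v) - (a + b) =
      (φ (x + t • v) - a) + (ψ (x + t • v) - b) := by
    rw [← EReal.coe_add, sub_eq_add_neg, sub_eq_add_neg, sub_eq_add_neg, ← EReal.coe_neg,
      ← EReal.coe_neg, ← EReal.coe_neg, neg_add, EReal.coe_add]
    ac_rfl
  simp only [diffQuot, ← ha, ← hb, hsplit]
  exact EReal.left_distrib_of_nonneg_of_ne_top (EReal.coe_nonneg.mpr (inv_nonneg.mpr ht))
    (EReal.coe_ne_top _) _ _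

end DiffQuot

section Subderivative

variable {X : Type*} [NormedAddCommGroup X] [NormedSpace ℝ X] {φ : X → EReal} {x : X}

theorem diffQuot_le_diffQuot_add (hbot : ∀ y, φ y ≠ ⊥) (hx : φ x ≠ ⊤) {U : Set X} {ℓ : ℝ}
    (hL : ∀ y ∈ {y | φ y ≠ ⊤} ∩ U, ∀ z ∈ {y | φ y ≠ ⊤} ∩ U,
      φ y - φ z ≤ ((ℓ * ‖y - z‖ : ℝ) : EReal))
    {t : ℝ} (ht : 0 < t) {v w : X} (hv : x + t • v ∈ {y | φ y ≠ ⊤} ∩ U) (hw : x + t • w ∈ U) :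
    diffQuot φ x t v ≤ diffQuot φ x t w + ((ℓ * ‖v - w‖ : ℝ) : EReal) := by
  by_cases hwdom : φ (x + t • w) = ⊤
  · rw [diffQuot_eq_top hx ht hwdom, EReal.top_add_coe]
    exact le_top
  have hlip : (φ (x + t • v)).toReal - (φ (x + t • w)).toReal ≤ ℓ * (t * ‖v - w‖) := by
    have h := hL _ hv _ ⟨hwdom, hw⟩
    rwa [← EReal.coe_toReal hv.1 (hbot _), ← EReal.coe_toReal hwdom (hbot _), ← EReal.coe_sub,
      EReal.coe_le_coe_iff, add_sub_add_left_eq_sub, ← smul_sub, norm_smul,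
      Real.norm_of_nonneg ht.le] at h
  rw [diffQuot_eq_coe hbot hx hv.1, diffQuot_eq_coe hbot hx hwdom, ← EReal.coe_add,
    EReal.coe_le_coe_iff]
  have hquot : t⁻¹ * ((φ (x + t • v)).toReal - (φ (x + t • w)).toReal) ≤ ℓ * ‖v - w‖ := by
    rw [inv_mul_le_iff₀ ht]
    linarith
  linarith

theorem subDeriv_ne_bot (hbot : ∀ y, φ y ≠ ⊥) (hx : φ x ≠ ⊤)
    (hlip : RelLipschitzAround φ {y | φ y ≠ ⊤} x) (u : X) : subDeriv φ x u ≠ ⊥ := by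
  obtain ⟨ℓ, hℓ, U, hU, hL⟩ := hlip
  have hfst : Tendsto Prod.fst (𝓝[>] (0 : ℝ) ×ˢ 𝓝 u) (𝓝 0) :=
    tendsto_fst.mono_right nhdsWithin_le_nhds
  have hbound : ∀ᶠ p : ℝ × X in 𝓝[>] (0 : ℝ) ×ˢ 𝓝 u,
      ((-(ℓ * (‖u‖ + 1)) : ℝ) : EReal) ≤ diffQuot φ x p.1 p.2 := by
    filter_upwards [tendsto_fst.eventually self_mem_nhdsWithin,
      (tendsto_add_smul hfst tendsto_snd x).eventually_mem hU,
      tendsto_snd.eventually (ball_mem_nhds u one_pos)] with p hp hpU hpu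
    have hx' : x + p.1 • (0 : X) ∈ {y | φ y ≠ ⊤} ∩ U := by
      simpa using ⟨hx, mem_of_mem_nhds hU⟩
    -- comparing with the direction `0`, whose quotient vanishes
    have h := diffQuot_le_diffQuot_add hbot hx hL hp hx' hpU
    rw [diffQuot_eq_coe hbot hx hx'.1, smul_zero, add_zero, sub_self, mul_zero, EReal.coe_zero,
      zero_sub, norm_neg] at h
    have hpu' : ‖p.2‖ ≤ ‖u‖ + 1 := by
      have := norm_le_norm_add_norm_sub' p.2 u
      rw [dist_eq_norm] at hpu
      linarith
    calc ((-(ℓ * (‖u‖ + 1)) : ℝ) : EReal) ≤ ((-(ℓ * ‖p.2‖)) : ℝ) := by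
          gcongr
      _ = 0 - ((ℓ * ‖p.2‖ : ℝ) : EReal) := by simp
      _ ≤ diffQuot φ x p.1 p.2 :=
          (EReal.sub_le_iff_le_add (.inl (EReal.coe_ne_bot _)) (.inl (EReal.coe_ne_top _))).mpr h
  exact ne_bot_of_le_ne_bot (EReal.coe_ne_bot _) (le_liminf_of_le (by isBoundedDefault) hbound)

theorem subDeriv_le_of_tendsto {t : ℕ → ℝ} {v : ℕ → X} {u : X} {s : ℕ → ℝ} {r : ℝ}
    (ht0 : ∀ k, 0 < t k) (ht : Tendsto t atTop (𝓝 0)) (hv : Tendsto v atTop (𝓝 u))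
    (hs : Tendsto s atTop (𝓝 r)) (hle : ∀ᶠ k in atTop, diffQuot φ x (t k) (v k) ≤ s k) :
    subDeriv φ x u ≤ r :=
  liminf_le_of_tendsto_of_eventually_le
    ((tendsto_nhdsWithin_iff.mpr ⟨ht, .of_forall ht0⟩).prodMk hv) (EReal.tendsto_coe.mpr hs) hle

theorem exists_seq_of_subDeriv_le {u : X} {r : ℝ} (h : subDeriv φ x u ≤ r) :
    ∃ t : ℕ → ℝ, ∃ v : ℕ → X, ∃ s : ℕ → ℝ, (∀ k, 0 < t k) ∧ Tendsto t atTop (𝓝 0) ∧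
      Tendsto v atTop (𝓝 u) ∧ Tendsto s atTop (𝓝 r) ∧ ∀ k, diffQuot φ x (t k) (v k) ≤ s k := by
  obtain ⟨p, s, hp, hs, hps⟩ :=
    exists_seq_tendsto_le_of_liminf_le h (tendsto_fst.eventually self_mem_nhdsWithin)
  exact ⟨fun k => (p k).1, fun k => (p k).2, s, fun k => (hps k).1,
    (tendsto_fst.comp hp).mono_right nhdsWithin_le_nhds, tendsto_snd.comp hp, hs,
    fun k => (hps k).2⟩

theorem outerLim_epiSet_diffQuot (φ : X → EReal) (x : X) :
    outerLim (fun t => epiSet (fun u => diffQuot φ x t u)) = epiSet (subDeriv φ x) := by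
  ext ⟨u, r⟩
  constructor
  · rintro ⟨t, w, ht0, ht, hw, hwS⟩
    exact subDeriv_le_of_tendsto ht0 ht hw.fst_nhds hw.snd_nhds (.of_forall hwS)
  · intro hr
    obtain ⟨t, v, s, ht0, ht, hv, hs, hle⟩ := exists_seq_of_subDeriv_le hr
    exact ⟨t, fun k => (v k, s k), ht0, ht, hv.prodMk_nhds hs, hle⟩

theorem mem_contTangent_of_subDeriv_ne_top (hx : φ x ≠ ⊤) {u : X} (hu : subDeriv φ x u ≠ ⊤) :
    u ∈ contTangent {y | φ y ≠ ⊤} x := by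
  obtain ⟨r, hr, -⟩ := EReal.lt_iff_exists_real_btwn.mp (lt_top_iff_ne_top.mpr hu)
  obtain ⟨t, v, s, ht0, ht, hv, -, hle⟩ := exists_seq_of_subDeriv_le hr.le
  exact ⟨t, v, ht0, ht, hv, fun k => add_smul_ne_top_of_diffQuot_ne_top hx (ht0 k)
    (ne_top_of_le_ne_top (EReal.coe_ne_top _) (hle k))⟩

theorem exists_seq_diffQuot_le_of_epiDiffAt (hepi : epiDiffAt φ x) {u : X} {r : ℝ}
    (hr : subDeriv φ x u ≤ r) {t : ℕ → ℝ} (ht0 : ∀ k, 0 < t k) (ht : Tendsto t atTop (𝓝 0)) :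
    ∃ w : ℕ → X, ∃ ρ : ℕ → ℝ, Tendsto w atTop (𝓝 u) ∧ Tendsto ρ atTop (𝓝 r) ∧
      ∀ᶠ k in atTop, diffQuot φ x (t k) (w k) ≤ ρ k := by
  have hmem : (u, r) ∈ innerLim (fun t => epiSet (fun u => diffQuot φ x t u)) := hepi.2 ▸ hr
  obtain ⟨w, hw, hwS⟩ := hmem t ht0 ht
  exact ⟨fun k => (w k).1, fun k => (w k).2, hw.fst_nhds, hw.snd_nhds, hwS⟩

structure RelLipschitzEpiDiffAt (φ : X → EReal) (x : X) : Prop where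
  ne_bot : ∀ y, φ y ≠ ⊥
  ne_top : φ x ≠ ⊤
  relLipschitz : RelLipschitzAround φ {y | φ y ≠ ⊤} x
  epiDiff : epiDiffAt φ x

theorem exists_seq_diffQuot_le_of_mem_dom (hφ : RelLipschitzEpiDiffAt φ x) {u : X} {r : ℝ}
    (hr : subDeriv φ x u ≤ r) {t : ℕ → ℝ} {v : ℕ → X} (ht0 : ∀ k, 0 < t k)
    (ht : Tendsto t atTop (𝓝 0)) (hv : Tendsto v atTop (𝓝 u))
    (hdom : ∀ᶠ k in atTop, φ (x + t k • v k) ≠ ⊤) :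
    ∃ s : ℕ → ℝ, Tendsto s atTop (𝓝 r) ∧ ∀ᶠ k in atTop, diffQuot φ x (t k) (v k) ≤ s k := by
  obtain ⟨ℓ, -, U, hU, hL⟩ := hφ.relLipschitz
  obtain ⟨w, ρ, hw, hρ, hwle⟩ := exists_seq_diffQuot_le_of_epiDiffAt hφ.epiDiff hr ht0 ht
  refine ⟨fun k => ρ k + ℓ * ‖v k - w k‖, by simpa using hρ.add ((hv.sub hw).norm.const_mul ℓ), ?_⟩
  filter_upwards [hwle, hdom, (tendsto_add_smul ht hv x).eventually_mem hU,
    (tendsto_add_smul ht hw x).eventually_mem hU] with k hwk hvk hvU hwU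
  calc diffQuot φ x (t k) (v k)
      ≤ diffQuot φ x (t k) (w k) + ((ℓ * ‖v k - w k‖ : ℝ) : EReal) :=
        diffQuot_le_diffQuot_add hφ.ne_bot hφ.ne_top hL (ht0 k) ⟨hvk, hvU⟩ hwU
    _ ≤ ((ρ k + ℓ * ‖v k - w k‖ : ℝ) : EReal) := by
        rw [EReal.coe_add]
        gcongr

end Subderivative

section SumRule

variable {X : Type*} [NormedAddCommGroup X] [NormedSpace ℝ X] {φ ψ : X → EReal} {x : X}

theorem exists_seq_mem_inter_of_infDist_le {A B : Set X} (hAB : (A ∩ B).Nonempty) {κ : ℝ}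
    (hκ : 0 ≤ κ) {U : Set X} (hU : U ∈ 𝓝 x)
    (hQC : ∀ y ∈ U, infDist y (A ∩ B) ≤ κ * (infDist y A + infDist y B))
    {t : ℕ → ℝ} (ht0 : ∀ k, 0 < t k) (ht : Tendsto t atTop (𝓝 0)) {u : X} {wA wB : ℕ → X}
    (hwA : Tendsto wA atTop (𝓝 u)) (hwB : Tendsto wB atTop (𝓝 u))
    (hA : ∀ᶠ k in atTop, x + t k • wA k ∈ A) (hB : ∀ᶠ k in atTop, x + t k • wB k ∈ B) :
    ∃ v : ℕ → X, Tendsto v atTop (𝓝 u) ∧ ∀ᶠ k in atTop, x + t k • v k ∈ A ∩ B := by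
  -- the slack `1 / (k + 1)` makes the distance bound strict, so a near point of `A ∩ B` exists
  set δ : ℕ → ℝ := fun k => κ * (‖u - wA k‖ + ‖u - wB k‖) + 1 / (k + 1)
  have hδ : Tendsto δ atTop (𝓝 0) := by
    have hA' := (tendsto_const_nhds (x := u)).sub hwA
    have hB' := (tendsto_const_nhds (x := u)).sub hwB
    simpa [δ] using
      ((hA'.norm.add hB'.norm).const_mul κ).add tendsto_one_div_add_atTop_nhds_zero_nat
  have hex : ∀ᶠ k in atTop, ∃ v, x + t k • v ∈ A ∩ B ∧ ‖v - u‖ < δ k := by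
    filter_upwards [hA, hB, (tendsto_add_smul ht tendsto_const_nhds x).eventually_mem hU]
      with k hAk hBk hUk
    refine exists_add_smul_mem_of_infDist_lt hAB (ht0 k) ?_
    calc infDist (x + t k • u) (A ∩ B)
        ≤ κ * (infDist (x + t k • u) A + infDist (x + t k • u) B) := hQC _ hUk
      _ ≤ κ * (t k * ‖u - wA k‖ + t k * ‖u - wB k‖) := by
          gcongr
          exacts [infDist_add_smul_le (ht0 k).le hAk u, infDist_add_smul_le (ht0 k).le hBk u]
      _ = t k * (κ * (‖u - wA k‖ + ‖u - wB k‖)) := by ring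
      _ < t k * δ k := mul_lt_mul_of_pos_left (lt_add_of_pos_right _ Nat.one_div_pos_of_nat) (ht0 k)
  obtain ⟨v, hv⟩ := hex.choice
  refine ⟨v, ?_, hv.mono fun k hk => hk.1⟩
  rw [tendsto_iff_norm_sub_tendsto_zero]
  exact squeeze_zero' (.of_forall fun k => norm_nonneg _) (hv.mono fun k hk => hk.2.le) hδ

theorem exists_seq_mem_dom_inter (hφx : φ x ≠ ⊤) (hψx : ψ x ≠ ⊤) (hφ : epiDiffAt φ x)
    (hψ : epiDiffAt ψ x) {κ : ℝ} (hκ : 0 ≤ κ) {U : Set X} (hU : U ∈ 𝓝 x)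
    (hQC : ∀ y ∈ U, infDist y ({y | φ y ≠ ⊤} ∩ {y | ψ y ≠ ⊤}) ≤
      κ * (infDist y {y | φ y ≠ ⊤} + infDist y {y | ψ y ≠ ⊤}))
    {u : X} {a b : ℝ} (ha : subDeriv φ x u ≤ a) (hb : subDeriv ψ x u ≤ b)
    {t : ℕ → ℝ} (ht0 : ∀ k, 0 < t k) (ht : Tendsto t atTop (𝓝 0)) :
    ∃ v : ℕ → X, Tendsto v atTop (𝓝 u) ∧
      ∀ᶠ k in atTop, x + t k • v k ∈ {y | φ y ≠ ⊤} ∩ {y | ψ y ≠ ⊤} := by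
  obtain ⟨wφ, _, hwφ, -, hφle⟩ := exists_seq_diffQuot_le_of_epiDiffAt hφ ha ht0 ht
  obtain ⟨wψ, _, hwψ, -, hψle⟩ := exists_seq_diffQuot_le_of_epiDiffAt hψ hb ht0 ht
  refine exists_seq_mem_inter_of_infDist_le ⟨x, hφx, hψx⟩ hκ hU hQC ht0 ht hwφ hwψ
    (hφle.mono fun k hk => ?_) (hψle.mono fun k hk => ?_)
  · exact add_smul_ne_top_of_diffQuot_ne_top hφx (ht0 k)
      (ne_top_of_le_ne_top (EReal.coe_ne_top _) hk)
  · exact add_smul_ne_top_of_diffQuot_ne_top hψx (ht0 k)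
      (ne_top_of_le_ne_top (EReal.coe_ne_top _) hk)

theorem add_subDeriv_le_subDeriv_add (hφ : φ x ≠ ⊥) (hφ' : φ x ≠ ⊤) (hψ : ψ x ≠ ⊥)
    (hψ' : ψ x ≠ ⊤) (u : X) :
    subDeriv φ x u + subDeriv ψ x u ≤ subDeriv (fun y => φ y + ψ y) x u := by
  refine EReal.le_liminf_add.trans_eq (liminf_congr ?_)
  filter_upwards [tendsto_fst.eventually self_mem_nhdsWithin] with p hp
  exact (diffQuot_add hφ hφ' hψ hψ' (le_of_lt hp) p.2).symm

theorem exists_seq_diffQuot_add_le (hφ : RelLipschitzEpiDiffAt φ x)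
    (hψ : RelLipschitzEpiDiffAt ψ x) {u : X} {a b : ℝ} (ha : subDeriv φ x u ≤ a)
    (hb : subDeriv ψ x u ≤ b) {t : ℕ → ℝ} {v : ℕ → X} (ht0 : ∀ k, 0 < t k)
    (ht : Tendsto t atTop (𝓝 0)) (hv : Tendsto v atTop (𝓝 u))
    (hdom : ∀ᶠ k in atTop, x + t k • v k ∈ {y | φ y ≠ ⊤} ∩ {y | ψ y ≠ ⊤}) :
    ∃ s : ℕ → ℝ, Tendsto s atTop (𝓝 (a + b)) ∧
      ∀ᶠ k in atTop, diffQuot (fun y => φ y + ψ y) x (t k) (v k) ≤ s k := by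
  obtain ⟨sφ, hsφ, hφle⟩ :=
    exists_seq_diffQuot_le_of_mem_dom hφ ha ht0 ht hv (hdom.mono fun k hk => hk.1)
  obtain ⟨sψ, hsψ, hψle⟩ :=
    exists_seq_diffQuot_le_of_mem_dom hψ hb ht0 ht hv (hdom.mono fun k hk => hk.2)
  refine ⟨sφ + sψ, hsφ.add hsψ, ?_⟩
  filter_upwards [hφle, hψle] with k hφk hψk
  rw [diffQuot_add (hφ.ne_bot x) hφ.ne_top (hψ.ne_bot x) hψ.ne_top (ht0 k).le, Pi.add_apply,
    EReal.coe_add]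
  exact add_le_add hφk hψk

theorem subDeriv_add_le (hφ : RelLipschitzEpiDiffAt φ x) (hψ : RelLipschitzEpiDiffAt ψ x)
    (hQC : contTangent ({y | φ y ≠ ⊤} ∩ {y | ψ y ≠ ⊤}) x =
        contTangent {y | φ y ≠ ⊤} x ∩ contTangent {y | ψ y ≠ ⊤} x ∨
      ∃ κ : ℝ, 0 < κ ∧ ∃ U ∈ 𝓝 x, ∀ y ∈ U,
        infDist y ({y | φ y ≠ ⊤} ∩ {y | ψ y ≠ ⊤}) ≤
          κ * (infDist y {y | φ y ≠ ⊤} + infDist y {y | ψ y ≠ ⊤}))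
    (u : X) : subDeriv (fun y => φ y + ψ y) x u ≤ subDeriv φ x u + subDeriv ψ x u := by
  have hφbot := subDeriv_ne_bot hφ.ne_bot hφ.ne_top hφ.relLipschitz u
  have hψbot := subDeriv_ne_bot hψ.ne_bot hψ.ne_top hψ.relLipschitz u
  by_cases hφtop : subDeriv φ x u = ⊤
  · rw [hφtop, EReal.top_add_of_ne_bot hψbot]
    exact le_top
  by_cases hψtop : subDeriv ψ x u = ⊤
  · rw [hψtop, EReal.add_top_of_ne_bot hφbot]
    exact le_top
  obtain ⟨t, v, ht0, ht, hv, hdom⟩ : ∃ t : ℕ → ℝ, ∃ v : ℕ → X, (∀ k, 0 < t k) ∧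
      Tendsto t atTop (𝓝 0) ∧ Tendsto v atTop (𝓝 u) ∧
      ∀ᶠ k in atTop, x + t k • v k ∈ {y | φ y ≠ ⊤} ∩ {y | ψ y ≠ ⊤} := by
    rcases hQC with hT | ⟨κ, hκ, U, hU, hQC⟩
    · have hu : u ∈ contTangent ({y | φ y ≠ ⊤} ∩ {y | ψ y ≠ ⊤}) x := hT ▸
        ⟨mem_contTangent_of_subDeriv_ne_top hφ.ne_top hφtop,
          mem_contTangent_of_subDeriv_ne_top hψ.ne_top hψtop⟩
      obtain ⟨t, v, ht0, ht, hv, hmem⟩ := hu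
      exact ⟨t, v, ht0, ht, hv, .of_forall hmem⟩
    · have ht := tendsto_one_div_add_atTop_nhds_zero_nat (𝕜 := ℝ)
      obtain ⟨v, hv, hdom⟩ := exists_seq_mem_dom_inter hφ.ne_top hψ.ne_top hφ.epiDiff
        hψ.epiDiff hκ.le hU hQC (EReal.le_coe_toReal hφtop) (EReal.le_coe_toReal hψtop)
        (fun k => Nat.one_div_pos_of_nat) ht
      exact ⟨_, v, fun k => Nat.one_div_pos_of_nat, ht, hv, hdom⟩
  lift subDeriv φ x u to ℝ using ⟨hφtop, hφbot⟩ with a ha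
  lift subDeriv ψ x u to ℝ using ⟨hψtop, hψbot⟩ with b hb
  obtain ⟨s, hs, hle⟩ := exists_seq_diffQuot_add_le hφ hψ ha.ge hb.ge ht0 ht hv hdom
  exact EReal.coe_add a b ▸ subDeriv_le_of_tendsto ht0 ht hv hs hle

theorem epiSet_subset_innerLim_add (hφ : RelLipschitzEpiDiffAt φ x)
    (hψ : RelLipschitzEpiDiffAt ψ x) {κ : ℝ} (hκ : 0 ≤ κ) {U : Set X} (hU : U ∈ 𝓝 x)
    (hQC : ∀ y ∈ U, infDist y ({y | φ y ≠ ⊤} ∩ {y | ψ y ≠ ⊤}) ≤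
      κ * (infDist y {y | φ y ≠ ⊤} + infDist y {y | ψ y ≠ ⊤})) :
    epiSet (subDeriv (fun y => φ y + ψ y) x) ⊆
      innerLim (fun t => epiSet (fun u => diffQuot (fun y => φ y + ψ y) x t u)) := by
  rintro ⟨u, r⟩ hr t ht0 ht
  have hsum : subDeriv φ x u + subDeriv ψ x u ≤ r :=
    (add_subDeriv_le_subDeriv_add (hφ.ne_bot x) hφ.ne_top (hψ.ne_bot x) hψ.ne_top u).trans hr
  have hφbot := subDeriv_ne_bot hφ.ne_bot hφ.ne_top hφ.relLipschitz u
  have hψbot := subDeriv_ne_bot hψ.ne_bot hψ.ne_top hψ.relLipschitz u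
  have hφtop : subDeriv φ x u ≠ ⊤ := fun h => by
    simp [h, EReal.top_add_of_ne_bot hψbot] at hsum
  have hψtop : subDeriv ψ x u ≠ ⊤ := fun h => by
    simp [h, EReal.add_top_of_ne_bot hφbot] at hsum
  lift subDeriv φ x u to ℝ using ⟨hφtop, hφbot⟩ with a ha
  lift subDeriv ψ x u to ℝ using ⟨hψtop, hψbot⟩ with b hb
  obtain ⟨v, hv, hdom⟩ := exists_seq_mem_dom_inter hφ.ne_top hψ.ne_top hφ.epiDiff hψ.epiDiff
    hκ hU hQC ha.ge hb.ge ht0 ht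
  obtain ⟨s, hs, hle⟩ := exists_seq_diffQuot_add_le hφ hψ ha.ge hb.ge ht0 ht hv hdom
  have hab : a + b ≤ r := by exact_mod_cast hsum
  refine ⟨fun k => (v k, s k + (r - (a + b))),
    hv.prodMk_nhds (by simpa using hs.add_const (r - (a + b))), ?_⟩
  filter_upwards [hle] with k hk
  exact hk.trans (EReal.coe_le_coe_iff.mpr (by linarith))

theorem epiDiffAt_add (hφ : RelLipschitzEpiDiffAt φ x) (hψ : RelLipschitzEpiDiffAt ψ x)
    {κ : ℝ} (hκ : 0 ≤ κ) {U : Set X} (hU : U ∈ 𝓝 x)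
    (hQC : ∀ y ∈ U, infDist y ({y | φ y ≠ ⊤} ∩ {y | ψ y ≠ ⊤}) ≤
      κ * (infDist y {y | φ y ≠ ⊤} + infDist y {y | ψ y ≠ ⊤})) :
    epiDiffAt (fun y => φ y + ψ y) x :=
  ⟨outerLim_epiSet_diffQuot _ x,
    ((innerLim_subset_outerLim _).trans (outerLim_epiSet_diffQuot _ x).subset).antisymm
      (epiSet_subset_innerLim_add hφ hψ hκ hU hQC)⟩

end SumRule

/-- subderivative sum rule. -/
theorem subderivative_sum_rule
    {X : Type*} [NormedAddCommGroup X] [NormedSpace ℝ X]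
    (φ ψ : X → EReal) (xb : X)
    (hφbot : ∀ x, φ x ≠ ⊥) (hψbot : ∀ x, ψ x ≠ ⊥)
    (hxbφ : φ xb ≠ ⊤) (hxbψ : ψ xb ≠ ⊤)
    (hφlip : RelLipschitzAround φ {x | φ x ≠ ⊤} xb)
    (hψlip : RelLipschitzAround ψ {x | ψ x ≠ ⊤} xb)
    (hφepi : epiDiffAt φ xb) (hψepi : epiDiffAt ψ xb)
    (hQC :
      contTangent ({x | φ x ≠ ⊤} ∩ {x | ψ x ≠ ⊤}) xb =
        contTangent {x | φ x ≠ ⊤} xb ∩ contTangent {x | ψ x ≠ ⊤} xb ∨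
      ∃ κ : ℝ, 0 < κ ∧ ∃ U ∈ 𝓝 xb, ∀ x ∈ U,
        infDist x ({x | φ x ≠ ⊤} ∩ {x | ψ x ≠ ⊤}) ≤
          κ * (infDist x {x | φ x ≠ ⊤} + infDist x {x | ψ x ≠ ⊤})) :
    (∀ u : X, subDeriv (fun x => φ x + ψ x) xb u = subDeriv φ xb u + subDeriv ψ xb u) ∧
    ((∃ κ : ℝ, 0 < κ ∧ ∃ U ∈ 𝓝 xb, ∀ x ∈ U,
        infDist x ({x | φ x ≠ ⊤} ∩ {x | ψ x ≠ ⊤}) ≤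
          κ * (infDist x {x | φ x ≠ ⊤} + infDist x {x | ψ x ≠ ⊤})) →
      epiDiffAt (fun x => φ x + ψ x) xb) := by
  have hφ : RelLipschitzEpiDiffAt φ xb := ⟨hφbot, hxbφ, hφlip, hφepi⟩
  have hψ : RelLipschitzEpiDiffAt ψ xb := ⟨hψbot, hxbψ, hψlip, hψepi⟩
  refine ⟨fun u => (subDeriv_add_le hφ hψ hQC u).antisymm
    (add_subDeriv_le_subDeriv_add (hφbot xb) hxbφ (hψbot xb) hxbψ u), ?_⟩
  rintro ⟨κ, hκ, U, hU, hmetric⟩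
  exact epiDiffAt_add hφ hψ hκ.le hU hmetric
end
end

section
/- Let X and Y be normed spaces, let f : X → Y be continuously differentiable around x̄, and let θ : Y → (-∞,∞] be locally Lipschitz continuous around ȳ := f(x̄) and Dini–Hadamard regular at ȳ. Then the composition θ∘f is Dini–Hadamard regular at x̄, and the subdifferential chain rule holds as an equality: ∂⁻(θ∘f)(x̄) = ∇f(x̄)*(∂⁻θ(ȳ)), where ∇f(x̄)* : Y* → X* is the adjoint of the derivative. -/
open Filter Topology Set Metric Pointwise

noncomputable section

variable {E : Type*} [NormedAddCommGroup E] [NormedSpace ℝ E]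

/-! Near `ȳ` the function `θ` is a real Lipschitz function `φ`, so its difference quotients at
the same `t` in two directions differ by at most `ℓ` times the distance of the directions. Hence
`dθ(ȳ)` is finite, bounded by `ℓ‖·‖`, and only the limit direction matters. The difference
quotient of `θ ∘ f` at `(t, u)` is that of `θ` at `(t, (f(x̄ + tu) - f(x̄))/t)`, and these
directions tend to `∇f(x̄)u`, so `d(θ ∘ f)(x̄) = dθ(ȳ) ∘ ∇f(x̄)`.

Regularity makes `dθ(ȳ)` the support function of `∂⁻θ(ȳ)`, hence sublinear. A functional
`v ≤ dθ(ȳ) ∘ ∇f(x̄)` vanishes on the kernel of `∇f(x̄)`, so it factors through the range of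
`∇f(x̄)`, and Hahn–Banach extends the factor to some `w ≤ dθ(ȳ)`, that is `w ∈ ∂⁻θ(ȳ)`. -/

section Liminf

variable {α : Type*} {l : Filter α}

theorem liminf_coe_le_liminf_coe_of_tendsto_sub {a b : α → ℝ}
    (h : Tendsto (fun x => a x - b x) l (𝓝 0)) :
    liminf (fun x => (a x : EReal)) l ≤ liminf (fun x => (b x : EReal)) l := by
  refine EReal.ge_of_forall_gt_iff_ge.1 fun c hc => ?_
  obtain ⟨c', hcc', hc'⟩ := EReal.exists_between_coe_real hc
  have hgap : ∀ᶠ x in l, a x - b x < c' - c :=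
    h.eventually (gt_mem_nhds (sub_pos.2 (EReal.coe_lt_coe_iff.1 hcc')))
  refine le_liminf_of_le (by isBoundedDefault) ?_
  filter_upwards [eventually_lt_of_lt_liminf hc', hgap] with x hx hgapx
  have hc'a : c' < a x := EReal.coe_lt_coe_iff.1 hx
  exact EReal.coe_le_coe_iff.2 (by linarith)

theorem liminf_coe_eq_of_tendsto_sub {a b : α → ℝ}
    (h : Tendsto (fun x => a x - b x) l (𝓝 0)) :
    liminf (fun x => (a x : EReal)) l = liminf (fun x => (b x : EReal)) l :=
  le_antisymm (liminf_coe_le_liminf_coe_of_tendsto_sub h)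
    (liminf_coe_le_liminf_coe_of_tendsto_sub (by simpa using h.neg))

theorem liminf_comp_fst_prod {β γ : Type*} [CompleteLattice γ] (F : α → γ) (l : Filter α)
    (l' : Filter β) [l'.NeBot] :
    liminf (fun p : α × β => F p.1) (l ×ˢ l') = liminf F l := by
  rw [show (fun p : α × β => F p.1) = F ∘ Prod.fst from rfl, liminf_comp, map_fst_prod]

theorem eventually_fst_pos {β : Type*} (l' : Filter β) :
    ∀ᶠ p : ℝ × β in 𝓝[>] 0 ×ˢ l', 0 < p.1 :=
  (eventually_mem_nhdsWithin : ∀ᶠ t in 𝓝[>] (0 : ℝ), t ∈ Ioi 0).prod_inl l'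

end Liminf

theorem LocLipschitzAt.exists_lipschitzOnWith_toReal {F : Type*} [NormedAddCommGroup F]
    {θ : F → EReal} {y : F} (hbot : ∀ z, θ z ≠ ⊥) (hθ : LocLipschitzAt θ y) :
    ∃ U ∈ 𝓝 y, (∀ z ∈ U, ((θ z).toReal : EReal) = θ z) ∧
      ∃ K, LipschitzOnWith K (fun z => (θ z).toReal) U := by
  obtain ⟨ℓ, U, hU, hfin, hlip⟩ := hθ
  have hcoe : ∀ z ∈ U, ((θ z).toReal : EReal) = θ z :=
    fun z hz => EReal.coe_toReal (hfin z hz) (hbot z)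
  refine ⟨U, hU, hcoe, _, LipschitzOnWith.of_le_add_mul' ℓ fun z hz w hw => ?_⟩
  have h := hlip z hz w hw
  rw [← hcoe z hz, ← hcoe w hw, ← EReal.coe_sub, EReal.coe_le_coe_iff] at h
  rw [dist_eq_norm]
  linarith

section Lipschitz

variable {α : Type*} {l : Filter α} {θ : E → EReal} {y : E}

theorem diffQuot_eq_coe_s6 {φ : E → ℝ} {U : Set E} (hθ : ∀ z ∈ U, (φ z : EReal) = θ z)
    {t : ℝ} {w : E} (hy : y ∈ U) (hw : y + t • w ∈ U) :
    diffQuot θ y t w = ((t⁻¹ * (φ (y + t • w) - φ y) : ℝ) : EReal) := by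
  rw [diffQuot, ← hθ _ hy, ← hθ _ hw, EReal.coe_mul, EReal.coe_sub]

theorem LipschitzOnWith.abs_sub_slope_le {φ : E → ℝ} {U : Set E} {K : NNReal}
    (hφ : LipschitzOnWith K φ U) {t : ℝ} (ht : 0 < t) {v₁ v₂ : E}
    (h₁ : y + t • v₁ ∈ U) (h₂ : y + t • v₂ ∈ U) :
    |t⁻¹ * (φ (y + t • v₁) - φ y) - t⁻¹ * (φ (y + t • v₂) - φ y)| ≤ K * ‖v₁ - v₂‖ := by
  have h := hφ.dist_le_mul _ h₁ _ h₂
  rw [Real.dist_eq, dist_eq_norm, add_sub_add_left_eq_sub, ← smul_sub, norm_smul,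
    Real.norm_of_nonneg ht.le] at h
  rw [← mul_sub, sub_sub_sub_cancel_right, abs_mul, abs_inv, abs_of_pos ht,
    inv_mul_le_iff₀ ht]
  linarith

theorem eventually_add_smul_mem {U : Set E} (hU : U ∈ 𝓝 y) {τ : α → ℝ} {v : α → E} {w : E}
    (hτ : Tendsto τ l (𝓝 0)) (hv : Tendsto v l (𝓝 w)) : ∀ᶠ a in l, y + τ a • v a ∈ U := by
  have h : Tendsto (fun a => y + τ a • v a) l (𝓝 y) := by
    simpa using tendsto_const_nhds.add (hτ.smul hv)
  exact h hU

theorem LocLipschitzAt.liminf_diffQuot_congr (hbot : ∀ z, θ z ≠ ⊥) (hθ : LocLipschitzAt θ y)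
    {τ : α → ℝ} {v₁ v₂ : α → E} {w : E} (hτ : Tendsto τ l (𝓝[>] 0))
    (h₁ : Tendsto v₁ l (𝓝 w)) (h₂ : Tendsto v₂ l (𝓝 w)) :
    liminf (fun a => diffQuot θ y (τ a) (v₁ a)) l =
      liminf (fun a => diffQuot θ y (τ a) (v₂ a)) l := by
  obtain ⟨U, hU, hθU, K, hK⟩ := hθ.exists_lipschitzOnWith_toReal hbot
  let q (v : α → E) (a : α) : ℝ := (τ a)⁻¹ * ((θ (y + τ a • v a)).toReal - (θ y).toReal)
  have hτ₀ : Tendsto τ l (𝓝 0) := tendsto_nhds_of_tendsto_nhdsWithin hτ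
  have hreal : ∀ v, Tendsto v l (𝓝 w) →
      (fun a => diffQuot θ y (τ a) (v a)) =ᶠ[l] fun a => (q v a : EReal) := fun v hv =>
    (eventually_add_smul_mem hU hτ₀ hv).mono fun _ ha => diffQuot_eq_coe_s6 hθU (mem_of_mem_nhds hU) ha
  have hclose : ∀ᶠ a in l, ‖q v₁ a - q v₂ a‖ ≤ K * ‖v₁ a - v₂ a‖ := by
    filter_upwards [hτ.eventually_mem self_mem_nhdsWithin, eventually_add_smul_mem hU hτ₀ h₁,
      eventually_add_smul_mem hU hτ₀ h₂] with a hpos ha₁ ha₂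
    exact hK.abs_sub_slope_le hpos ha₁ ha₂
  have hlim : Tendsto (fun a => (K : ℝ) * ‖v₁ a - v₂ a‖) l (𝓝 0) := by
    simpa using (h₁.sub h₂).norm.const_mul (K : ℝ)
  rw [liminf_congr (hreal v₁ h₁), liminf_congr (hreal v₂ h₂)]
  exact liminf_coe_eq_of_tendsto_sub (squeeze_zero_norm' hclose hlim)

theorem LocLipschitzAt.subDeriv_eq_liminf (hbot : ∀ z, θ z ≠ ⊥) (hθ : LocLipschitzAt θ y)
    (w : E) : subDeriv θ y w = liminf (fun t => diffQuot θ y t w) (𝓝[>] 0) := by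
  rw [subDeriv, hθ.liminf_diffQuot_congr hbot tendsto_fst tendsto_snd tendsto_const_nhds]
  exact liminf_comp_fst_prod (fun t => diffQuot θ y t w) _ (𝓝 w)

theorem LocLipschitzAt.exists_subDeriv_eq_coe_le (hbot : ∀ z, θ z ≠ ⊥)
    (hθ : LocLipschitzAt θ y) : ∃ K : ℝ, ∀ z, ∃ r : ℝ, subDeriv θ y z = r ∧ r ≤ K * ‖z‖ := by
  obtain ⟨U, hU, hθU, K, hK⟩ := hθ.exists_lipschitzOnWith_toReal hbot
  refine ⟨K, fun z => ?_⟩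
  have hbound : ∀ᶠ t in 𝓝[>] (0 : ℝ), ∃ r : ℝ, diffQuot θ y t z = r ∧ |r| ≤ K * ‖z‖ := by
    filter_upwards [self_mem_nhdsWithin, eventually_add_smul_mem hU
      (tendsto_nhds_of_tendsto_nhdsWithin tendsto_id) tendsto_const_nhds] with t ht hmem
    refine ⟨_, diffQuot_eq_coe_s6 hθU (mem_of_mem_nhds hU) hmem, ?_⟩
    simpa using hK.abs_sub_slope_le ht hmem (v₂ := 0) (by simpa using mem_of_mem_nhds hU)
  have hlo : ((-(K * ‖z‖) : ℝ) : EReal) ≤ subDeriv θ y z := by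
    rw [hθ.subDeriv_eq_liminf hbot]
    refine le_liminf_of_le (by isBoundedDefault) (hbound.mono fun t ⟨r, hr, hrK⟩ => ?_)
    rw [hr, EReal.coe_le_coe_iff]
    exact (abs_le.1 hrK).1
  have hhi : subDeriv θ y z ≤ ((K * ‖z‖ : ℝ) : EReal) := by
    rw [hθ.subDeriv_eq_liminf hbot]
    refine liminf_le_of_frequently_le' (hbound.mono fun t ⟨r, hr, hrK⟩ => ?_).frequently
    rw [hr, EReal.coe_le_coe_iff]
    exact (abs_le.1 hrK).2
  induction h : subDeriv θ y z using EReal.rec with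
  | bot => exact absurd (le_bot_iff.1 (h ▸ hlo)) (EReal.coe_ne_bot _)
  | top => exact absurd (top_le_iff.1 (h ▸ hhi)) (EReal.coe_ne_top _)
  | coe r => exact ⟨r, rfl, EReal.coe_le_coe_iff.1 (h ▸ hhi)⟩

end Lipschitz

section Chain

variable {X : Type*} [NormedAddCommGroup X] [NormedSpace ℝ X]

theorem HasFDerivAt.tendsto_inv_smul_sub {f : X → E} {f' : X →L[ℝ] E} {x : X}
    (hf : HasFDerivAt f f' x) (u : X) :
    Tendsto (fun p : ℝ × X => p.1⁻¹ • (f (x + p.1 • p.2) - f x))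
      (𝓝[>] 0 ×ˢ 𝓝 u) (𝓝 (f' u)) := by
  have htend : Tendsto (fun p : ℝ × X => p.1 • p.2) (𝓝[>] 0 ×ˢ 𝓝 u) (𝓝 0) := by
    have h := (tendsto_nhds_of_tendsto_nhdsWithin (tendsto_fst (f := 𝓝[>] (0 : ℝ)) (g := 𝓝 u))).smul
      (tendsto_snd (f := 𝓝[>] (0 : ℝ)) (g := 𝓝 u))
    rwa [zero_smul] at h
  have hcancel : (fun p : ℝ × X => p.2) =ᶠ[𝓝[>] 0 ×ˢ 𝓝 u] fun p => p.1⁻¹ • p.1 • p.2 :=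
    (eventually_fst_pos _).mono fun p hp => (inv_smul_smul₀ hp.ne' _).symm
  exact (hasFDerivWithinAt_univ.2 hf).lim htend (.of_forall fun _ => mem_univ _)
    (tendsto_snd.congr' hcancel)

theorem LocLipschitzAt.subDeriv_comp {f : X → E} {f' : X →L[ℝ] E} {θ : E → EReal} {x : X}
    (hbot : ∀ z, θ z ≠ ⊥) (hθ : LocLipschitzAt θ (f x)) (hf : HasFDerivAt f f' x) (u : X) :
    subDeriv (fun z => θ (f z)) x u = subDeriv θ (f x) (f' u) := by
  let g (p : ℝ × X) : E := p.1⁻¹ • (f (x + p.1 • p.2) - f x)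
  have hcomp : (fun p : ℝ × X => diffQuot (fun z => θ (f z)) x p.1 p.2)
      =ᶠ[𝓝[>] 0 ×ˢ 𝓝 u] fun p => diffQuot θ (f x) p.1 (g p) := by
    filter_upwards [eventually_fst_pos (𝓝 u)] with p hp
    simp only [diffQuot, g, smul_smul, mul_inv_cancel₀ hp.ne', one_smul,
      add_sub_cancel]
  calc subDeriv (fun z => θ (f z)) x u
      = liminf (fun p => diffQuot θ (f x) p.1 (g p)) (𝓝[>] 0 ×ˢ 𝓝 u) := liminf_congr hcomp
    _ = liminf (fun p : ℝ × X => diffQuot θ (f x) p.1 (f' u)) (𝓝[>] 0 ×ˢ 𝓝 u) :=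
      hθ.liminf_diffQuot_congr hbot tendsto_fst (hf.tendsto_inv_smul_sub u) tendsto_const_nhds
    _ = liminf (fun t => diffQuot θ (f x) t (f' u)) (𝓝[>] 0) :=
      liminf_comp_fst_prod (fun t => diffQuot θ (f x) t (f' u)) _ (𝓝 u)
    _ = subDeriv θ (f x) (f' u) := (hθ.subDeriv_eq_liminf hbot _).symm

end Chain

section SupportFunction

variable {S : Set (E →L[ℝ] ℝ)} {p : E → ℝ}
  (hp : ∀ z, (p z : EReal) = sSup ((fun w : E →L[ℝ] ℝ => (w z : EReal)) '' S))
include hp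

theorem le_of_coe_eq_sSup {w : E →L[ℝ] ℝ} (hw : w ∈ S) (z : E) : w z ≤ p z := by
  have h := le_sSup (mem_image_of_mem (fun w : E →L[ℝ] ℝ => (w z : EReal)) hw)
  rwa [← hp, EReal.coe_le_coe_iff] at h

theorem add_le_of_coe_eq_sSup (z₁ z₂ : E) : p (z₁ + z₂) ≤ p z₁ + p z₂ := by
  have h : (p (z₁ + z₂) : EReal) ≤ ((p z₁ + p z₂ : ℝ) : EReal) := by
    rw [hp]
    refine sSup_le ?_
    rintro _ ⟨w, hw, rfl⟩
    dsimp only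
    rw [map_add, EReal.coe_le_coe_iff]
    exact add_le_add (le_of_coe_eq_sSup hp hw z₁) (le_of_coe_eq_sSup hp hw z₂)
  exact EReal.coe_le_coe_iff.1 h

theorem smul_le_of_coe_eq_sSup {c : ℝ} (hc : 0 ≤ c) (z : E) : p (c • z) ≤ c * p z := by
  have h : (p (c • z) : EReal) ≤ ((c * p z : ℝ) : EReal) := by
    rw [hp]
    refine sSup_le ?_
    rintro _ ⟨w, hw, rfl⟩
    dsimp only
    rw [map_smul, smul_eq_mul, EReal.coe_le_coe_iff]
    exact mul_le_mul_of_nonneg_left (le_of_coe_eq_sSup hp hw z) hc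
  exact EReal.coe_le_coe_iff.1 h

theorem smul_eq_of_coe_eq_sSup {c : ℝ} (hc : 0 < c) (z : E) : p (c • z) = c * p z := by
  refine le_antisymm (smul_le_of_coe_eq_sSup hp hc.le z) ?_
  have h := smul_le_of_coe_eq_sSup hp (inv_nonneg.2 hc.le) (c • z)
  rw [inv_smul_smul₀ hc.ne'] at h
  rwa [le_inv_mul_iff₀ hc] at h

end SupportFunction

theorem exists_le_comp_eq_of_le_sublinear {X Y : Type*} [NormedAddCommGroup X]
    [NormedSpace ℝ X] [NormedAddCommGroup Y] [NormedSpace ℝ Y] {p : Y → ℝ}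
    (hp_hom : ∀ c : ℝ, 0 < c → ∀ z, p (c • z) = c * p z)
    (hp_add : ∀ z₁ z₂, p (z₁ + z₂) ≤ p z₁ + p z₂) {K : ℝ} (hpK : ∀ z, p z ≤ K * ‖z‖)
    (A : X →L[ℝ] Y) (v : X →L[ℝ] ℝ) (hv : ∀ x, v x ≤ p (A x)) :
    ∃ w : Y →L[ℝ] ℝ, (∀ z, w z ≤ p z) ∧ w.comp A = v := by
  have hp0 : p 0 = 0 := by
    have h := hp_hom 2 two_pos 0
    rw [smul_zero] at h
    linarith
  have hker : LinearMap.ker (A : X →ₗ[ℝ] Y) ≤ LinearMap.ker (v : X →ₗ[ℝ] ℝ) := by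
    intro x hx
    have hAx : A x = 0 := hx
    have h₁ := hv x
    have h₂ := hv (-x)
    rw [map_neg, map_neg, hAx, neg_zero, hp0] at h₂
    rw [hAx, hp0] at h₁
    show v x = 0
    linarith
  let v₀ : LinearMap.range (A : X →ₗ[ℝ] Y) →ₗ[ℝ] ℝ :=
    ((LinearMap.ker (A : X →ₗ[ℝ] Y)).liftQ (v : X →ₗ[ℝ] ℝ) hker).comp
      (A : X →ₗ[ℝ] Y).quotKerEquivRange.symm.toLinearMap
  have hv₀ : ∀ x, v₀ ⟨(A : X →ₗ[ℝ] Y) x, LinearMap.mem_range_self _ x⟩ = v x := fun x => by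
    rw [LinearMap.comp_apply, LinearEquiv.coe_coe, LinearMap.quotKerEquivRange_symm_apply_image]
    rfl
  obtain ⟨g, hg_ext, hg_le⟩ := exists_extension_of_le_sublinear ⟨_, v₀⟩ p hp_hom hp_add
    (by rintro ⟨_, x, rfl⟩; exact (hv₀ x).trans_le (hv x))
  have hgK : ∀ z, ‖g z‖ ≤ K * ‖z‖ := fun z => by
    have hneg := hg_le (-z)
    have hK := hpK (-z)
    rw [map_neg] at hneg
    rw [norm_neg] at hK
    exact abs_le.2 ⟨by linarith, (hg_le z).trans (hpK z)⟩
  refine ⟨g.mkContinuous K hgK, hg_le, ?_⟩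
  ext x
  exact (hg_ext ⟨A x, LinearMap.mem_range_self _ x⟩).trans (hv₀ x)

theorem subDiff_eq_image_comp_of_subDeriv_eq {X Y : Type*} [NormedAddCommGroup X]
    [NormedSpace ℝ X] [NormedAddCommGroup Y] [NormedSpace ℝ Y] {φ : X → EReal} {θ : Y → EReal}
    {x : X} {y : Y} {A : X →L[ℝ] Y} (hφ : ∀ u, subDeriv φ x u = subDeriv θ y (A u))
    (hreg : DHRegular θ y) (hθ : ∃ K : ℝ, ∀ z, ∃ r : ℝ, subDeriv θ y z = r ∧ r ≤ K * ‖z‖) :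
    subDiff φ x = (fun l => l.comp A) '' subDiff θ y := by
  obtain ⟨K, hK⟩ := hθ
  choose p hp hpK using hK
  have hsup : ∀ z, (p z : EReal) = sSup ((fun w : Y →L[ℝ] ℝ => (w z : EReal)) '' subDiff θ y) :=
    fun z => (hp z).symm.trans (hreg z).symm
  refine Subset.antisymm (fun v hv => ?_) ?_
  · obtain ⟨w, hw, hwA⟩ := exists_le_comp_eq_of_le_sublinear
      (fun c hc => smul_eq_of_coe_eq_sSup hsup hc) (add_le_of_coe_eq_sSup hsup) hpK A v
      (fun u => by simpa only [hφ, hp, EReal.coe_le_coe_iff] using hv u)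
    exact ⟨w, fun z => by simpa only [hp, EReal.coe_le_coe_iff] using hw z, hwA⟩
  · rintro _ ⟨w, hw, rfl⟩ u
    rw [hφ]
    exact hw (A u)

theorem DH_subdifferential_chain_rule_general
    {X Y : Type*} [NormedAddCommGroup X] [NormedSpace ℝ X]
    [NormedAddCommGroup Y] [NormedSpace ℝ Y]
    (f : X → Y) (f' : X →L[ℝ] Y) (θ : Y → EReal) (xb : X)
    (hf' : HasFDerivAt f f' xb)
    (hθbot : ∀ y, θ y ≠ ⊥)
    (hθlip : LocLipschitzAt θ (f xb))
    (hθreg : DHRegular θ (f xb)) :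
    DHRegular (fun x => θ (f x)) xb ∧
    subDiff (fun x => θ (f x)) xb =
      (fun l : Y →L[ℝ] ℝ => l.comp f') '' subDiff θ (f xb) := by
  have hchain := hθlip.subDeriv_comp hθbot hf'
  have hsub := subDiff_eq_image_comp_of_subDeriv_eq hchain hθreg
    (hθlip.exists_subDeriv_eq_coe_le hθbot)
  refine ⟨fun u => ?_, hsub⟩
  rw [hsub, ← image_comp, hchain]
  exact hθreg (f' u)

/-- Dini–Hadamard subdifferential chain rule for locally Lipschitzian,
Dini–Hadamard regular outer functions. -/
theorem DH_subdifferential_chain_rule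
    {X Y : Type*} [NormedAddCommGroup X] [NormedSpace ℝ X]
    [NormedAddCommGroup Y] [NormedSpace ℝ Y]
    (f : X → Y) (f' : X →L[ℝ] Y) (θ : Y → EReal) (xb : X)
    (hf : ContDiffAt ℝ 1 f xb) (hf' : HasFDerivAt f f' xb)
    (hθbot : ∀ y, θ y ≠ ⊥)
    (hθlip : LocLipschitzAt θ (f xb))
    (hθreg : DHRegular θ (f xb)) :
    DHRegular (fun x => θ (f x)) xb ∧
    subDiff (fun x => θ (f x)) xb =
      (fun l : Y →L[ℝ] ℝ => l.comp f') '' subDiff θ (f xb) :=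
  DH_subdifferential_chain_rule_general f f' θ xb hf' hθbot hθlip hθreg
end
end

section
/- Let X be a normed space and let Ω ⊂ X be subamenable at x̄ ∈ Ω. Then the contingent tangent cone coincides with the weak sequential tangent cone: T_Ω(x̄) = T^w_Ω(x̄) := {u ∈ X : ∃ t_k ↓ 0 and a sequence u_k converging weakly to u with x̄ + t_k u_k ∈ Ω for all k}. -/
/-! A weakly convergent sequence is bounded (Banach–Steinhaus), so along a weak tangent
direction `u` the difference quotients of `f` are feasible directions of `Θ` at `f x̄` converging
weakly to `f'(x̄) u`. The feasible directions of a convex set form a convex set, so by Hahn–Banach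
`f'(x̄) u` lies in their norm closure; this gives `dist(f(x̄ + τu); Θ) = o(τ)`, and the
subamenability estimate turns it into `dist(x̄ + τu; Ω) = o(τ)`, i.e. `u ∈ T_Ω(x̄)`. -/

open Filter Topology Set Metric Pointwise

noncomputable section

variable {E : Type*} [NormedAddCommGroup E] [NormedSpace ℝ E]

/-- Weak (sequential) contingent tangent cone. -/
def weakTangent {X : Type*} [NormedAddCommGroup X] [NormedSpace ℝ X]
    (Ω : Set X) (x : X) : Set X :=
  {u | ∃ t : ℕ → ℝ, ∃ v : ℕ → X,
    (∀ k, 0 < t k) ∧ Tendsto t atTop (𝓝 0) ∧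
    (∀ l : X →L[ℝ] ℝ, Tendsto (fun k => l (v k)) atTop (𝓝 (l u))) ∧
    ∀ k, x + t k • v k ∈ Ω}

open Asymptotics

section

variable {F : Type*} [NormedAddCommGroup F] [NormedSpace ℝ F]

theorem contTangent_subset_weakTangent (Ω : Set E) (x : E) :
    contTangent Ω x ⊆ weakTangent Ω x := by
  rintro u ⟨t, v, htpos, ht0, hv, hmem⟩
  exact ⟨t, v, htpos, ht0, fun φ => (φ.continuous.tendsto u).comp hv, hmem⟩

theorem exists_norm_le_of_weak_tendsto {v : ℕ → E} {u : E}
    (hv : ∀ φ : E →L[ℝ] ℝ, Tendsto (fun k => φ (v k)) atTop (𝓝 (φ u))) :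
    ∃ M, ∀ k, ‖v k‖ ≤ M := by
  let J := NormedSpace.inclusionInDoubleDualLi (𝕜 := ℝ) (E := E)
  obtain ⟨M, hM⟩ := banach_steinhaus (g := fun k => J (v k)) fun φ =>
    ((hv φ).norm.bddAbove_range).imp fun _ hC k => hC (mem_range_self k)
  exact ⟨M, fun k => J.norm_map (v k) ▸ hM k⟩

theorem mem_closure_of_weak_tendsto {ι : Type*} {l : Filter ι} [l.NeBot] {C : Set E}
    (hC : Convex ℝ C) {w : ι → E} {z : E} (hwC : ∀ᶠ k in l, w k ∈ C)
    (hw : ∀ φ : E →L[ℝ] ℝ, Tendsto (fun k => φ (w k)) l (𝓝 (φ z))) : z ∈ closure C := by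
  by_contra hz
  obtain ⟨φ, b, hφC, hφz⟩ := geometric_hahn_banach_closed_point hC.closure isClosed_closure hz
  have : φ z ≤ b := le_of_tendsto (hw φ) (hwC.mono fun k hk => (hφC _ (subset_closure hk)).le)
  linarith

def feasibleDirections (Θ : Set E) (y : E) : Set E :=
  {w | ∀ᶠ τ in 𝓝[>] (0 : ℝ), y + τ • w ∈ Θ}

theorem convex_feasibleDirections {Θ : Set E} (hΘ : Convex ℝ Θ) (y : E) :
    Convex ℝ (feasibleDirections Θ y) := by
  intro w₁ h₁ w₂ h₂ a b ha hb hab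
  show ∀ᶠ τ in 𝓝[>] (0 : ℝ), y + τ • (a • w₁ + b • w₂) ∈ Θ
  filter_upwards [h₁, h₂] with τ hτ₁ hτ₂
  obtain rfl : b = 1 - a := by linarith
  convert hΘ hτ₁ hτ₂ ha hb hab using 1
  module

theorem smul_sub_mem_feasibleDirections {Θ : Set E} (hΘ : Convex ℝ Θ) {y z : E} (hy : y ∈ Θ)
    (hz : z ∈ Θ) {s : ℝ} (hs : 0 ≤ s) : s • (z - y) ∈ feasibleDirections Θ y := by
  have hs₁ : 0 < s + 1 := by linarith
  filter_upwards [Ioo_mem_nhdsGT (one_div_pos.2 hs₁)] with τ hτ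
  have hτs : τ * s ≤ 1 := by nlinarith [(lt_div_iff₀ hs₁).1 hτ.2, hτ.1]
  rw [smul_smul]
  exact hΘ.add_smul_sub_mem hy hz ⟨mul_nonneg hτ.1.le hs, hτs⟩

theorem isLittleO_infDist_add_smul_of_mem_closure {Θ : Set E} {y w : E}
    (hw : w ∈ closure (feasibleDirections Θ y)) :
    (fun τ : ℝ => infDist (y + τ • w) Θ) =o[𝓝[>] 0] fun τ => τ := by
  refine isLittleO_iff.2 fun c hc => ?_
  obtain ⟨w', hw', hww'⟩ := Metric.mem_closure_iff.1 hw c hc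
  filter_upwards [hw', self_mem_nhdsWithin] with τ hτ (hτpos : 0 < τ)
  rw [Real.norm_of_nonneg infDist_nonneg, Real.norm_of_nonneg hτpos.le]
  calc infDist (y + τ • w) Θ ≤ infDist (y + τ • w') Θ + dist (y + τ • w) (y + τ • w') :=
        infDist_le_infDist_add_dist
    _ = τ * dist w w' := by
        rw [infDist_zero_of_mem hτ, zero_add, dist_add_left, dist_smul₀,
          Real.norm_of_nonneg hτpos.le]
    _ ≤ c * τ := by nlinarith

theorem HasFDerivAt.tendsto_inv_smul_sub_sub_apply {ι : Type*} {l : Filter ι} {f : E → F}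
    {f' : E →L[ℝ] F} {x : E} (hf : HasFDerivAt f f' x) {t : ι → ℝ} {v : ι → E}
    (ht : Tendsto t l (𝓝 0)) (ht₀ : ∀ᶠ k in l, t k ≠ 0)
    (hv : IsBoundedUnder (· ≤ ·) l (norm ∘ v)) :
    Tendsto (fun k => (t k)⁻¹ • (f (x + t k • v k) - f x) - f' (v k)) l (𝓝 0) := by
  have htv : (fun k => t k • v k) =O[l] t := by
    simpa using (isBigO_refl t l).smul ((isBigO_one_iff ℝ).2 hv)
  have ho : (fun k => f (x + t k • v k) - f x - f' (t k • v k)) =o[l] t :=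
    ((hasFDerivAt_iff_isLittleO_nhds_zero.1 hf).comp_tendsto
      (ht.zero_smul_isBoundedUnder_le hv)).trans_isBigO htv
  refine ho.tendsto_inv_smul_nhds_zero.congr' ?_
  filter_upwards [ht₀] with k hk
  simp only [map_smul, smul_sub, inv_smul_smul₀ hk]

theorem HasFDerivAt.apply_mem_closure_feasibleDirections {f : E → F} {f' : E →L[ℝ] F}
    {x u : E} {Ω : Set E} {Θ : Set F} (hf : HasFDerivAt f f' x) (hΘ : Convex ℝ Θ)
    (hx : f x ∈ Θ) (hΩΘ : ∀ᶠ z in 𝓝 x, z ∈ Ω → f z ∈ Θ) (hu : u ∈ weakTangent Ω x) :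
    f' u ∈ closure (feasibleDirections Θ (f x)) := by
  obtain ⟨t, v, htpos, ht, hv, hmem⟩ := hu
  obtain ⟨M, hM⟩ := exists_norm_le_of_weak_tendsto hv
  have hvb : IsBoundedUnder (· ≤ ·) atTop (norm ∘ v) := isBoundedUnder_of ⟨M, hM⟩
  have hxk : Tendsto (fun k => x + t k • v k) atTop (𝓝 x) := by
    simpa using tendsto_const_nhds.add (ht.zero_smul_isBoundedUnder_le hvb)
  have he := hf.tendsto_inv_smul_sub_sub_apply ht (.of_forall fun k => (htpos k).ne') hvb
  refine mem_closure_of_weak_tendsto (convex_feasibleDirections hΘ _)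
    ((hxk.eventually hΩΘ).mono fun k hk =>
      smul_sub_mem_feasibleDirections hΘ hx (hk (hmem k)) (inv_nonneg.2 (htpos k).le))
    fun φ => ?_
  simpa using ((φ.continuous.tendsto 0).comp he).add (hv (φ.comp f'))

theorem HasFDerivAt.isLittleO_infDist_comp_add_smul {f : E → F} {f' : E →L[ℝ] F} {x u : E}
    {Θ : Set F} (hf : HasFDerivAt f f' x)
    (h : (fun τ : ℝ => infDist (f x + τ • f' u) Θ) =o[𝓝[>] 0] fun τ => τ) :
    (fun τ : ℝ => infDist (f (x + τ • u)) Θ) =o[𝓝[>] 0] fun τ => τ := by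
  have hline : HasDerivAt (fun τ : ℝ => f (x + τ • u)) (f' u) 0 := by
    refine hf.comp_hasDerivAt_of_eq 0 ?_ (by simp)
    simpa using ((hasDerivAt_id (0 : ℝ)).smul_const u).const_add x
  have hrem : (fun τ : ℝ => ‖f (x + τ • u) - f x - τ • f' u‖) =o[𝓝[>] 0] fun τ => τ := by
    simpa using (hasDerivAt_iff_isLittleO_nhds_zero.1 hline).norm_left.mono nhdsWithin_le_nhds
  refine (isBigO_of_le _ fun τ => ?_).trans_isLittleO (h.add hrem)
  rw [Real.norm_of_nonneg infDist_nonneg,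
    Real.norm_of_nonneg (add_nonneg infDist_nonneg (norm_nonneg _))]
  calc infDist (f (x + τ • u)) Θ
      ≤ infDist (f x + τ • f' u) Θ + dist (f (x + τ • u)) (f x + τ • f' u) :=
        infDist_le_infDist_add_dist
    _ = _ := by rw [dist_eq_norm, sub_add_eq_sub_sub]

theorem mem_contTangent_of_isLittleO_infDist {Ω : Set E} {x u : E} (hΩ : Ω.Nonempty)
    (h : (fun τ : ℝ => infDist (x + τ • u) Ω) =o[𝓝[>] 0] fun τ => τ) :
    u ∈ contTangent Ω x := by
  set t : ℕ → ℝ := fun k => 1 / ((k : ℝ) + 1)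
  have htpos : ∀ k, 0 < t k := fun k => by positivity
  have ht : Tendsto t atTop (𝓝 0) := tendsto_one_div_add_atTop_nhds_zero_nat
  have hquot : Tendsto (fun k => infDist (x + t k • u) Ω / t k) atTop (𝓝 0) :=
    h.tendsto_div_nhds_zero.comp
      (tendsto_nhdsWithin_iff.2 ⟨ht, .of_forall fun k => htpos k⟩)
  choose ω hωΩ hω using fun k => (infDist_lt_iff hΩ).1
    (lt_add_of_pos_right (infDist (x + t k • u) Ω) (mul_pos (htpos k) (htpos k)))
  refine ⟨t, fun k => (t k)⁻¹ • (ω k - x), htpos, ht, ?_, fun k => ?_⟩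
  · refine tendsto_iff_norm_sub_tendsto_zero.2 (squeeze_zero (fun _ => norm_nonneg _)
      (fun k => ?_) (by simpa using hquot.add ht))
    have hk := htpos k
    calc ‖(t k)⁻¹ • (ω k - x) - u‖ = (t k)⁻¹ * dist (x + t k • u) (ω k) := by
          rw [show (t k)⁻¹ • (ω k - x) - u = (t k)⁻¹ • (ω k - (x + t k • u)) by
              match_scalars <;> field_simp,
            norm_smul, norm_inv, Real.norm_of_nonneg hk.le, dist_comm, dist_eq_norm]
      _ ≤ (t k)⁻¹ * (infDist (x + t k • u) Ω + t k * t k) := by gcongr; exact (hω k).le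
      _ = infDist (x + t k • u) Ω / t k + t k := by field_simp
  · simpa [smul_inv_smul₀ (htpos k).ne'] using hωΩ k

end

theorem tangent_eq_weakTangent_of_subamenable_general
    {X Y : Type*} [NormedAddCommGroup X] [NormedSpace ℝ X]
    [NormedAddCommGroup Y] [NormedSpace ℝ Y]
    (Ω : Set X) (xb : X) (hxb : xb ∈ Ω)
    (f : X → Y) (Θ : Set Y) (κ : ℝ) (U : Set X)
    (hU : U ∈ 𝓝 xb) (hf : ContDiffAt ℝ 1 f xb)
    (hΘconv : Convex ℝ Θ) (hfxb : f xb ∈ Θ)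
    (hrep : Ω ∩ U = {x ∈ U | f x ∈ Θ})
    (hsub : ∀ x ∈ U, infDist x Ω ≤ κ * infDist (f x) Θ) :
    contTangent Ω xb = weakTangent Ω xb := by
  refine (contTangent_subset_weakTangent Ω xb).antisymm fun u hu => ?_
  have hf' : HasFDerivAt f (fderiv ℝ f xb) xb := (hf.differentiableAt one_ne_zero).hasFDerivAt
  have hΩΘ : ∀ᶠ z in 𝓝 xb, z ∈ Ω → f z ∈ Θ := by
    filter_upwards [hU] with z hzU hzΩ
    exact (hrep.subset ⟨hzΩ, hzU⟩).2
  have hΘo := hf'.isLittleO_infDist_comp_add_smul (isLittleO_infDist_add_smul_of_mem_closure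
    (hf'.apply_mem_closure_feasibleDirections hΘconv hfxb hΩΘ hu))
  have hline : Tendsto (fun τ : ℝ => xb + τ • u) (𝓝[>] 0) (𝓝 xb) :=
    (Continuous.tendsto' (by fun_prop) 0 xb (by simp)).mono_left nhdsWithin_le_nhds
  refine mem_contTangent_of_isLittleO_infDist ⟨xb, hxb⟩
    ((IsBigO.of_bound κ ?_).trans_isLittleO hΘo)
  filter_upwards [hline.eventually_mem hU] with τ hτ
  rw [Real.norm_of_nonneg infDist_nonneg, Real.norm_of_nonneg infDist_nonneg]
  exact hsub _ hτ

/-- for a set subamenable at `xb` (with subamenability data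
`Y, f, Θ, κ, U`), the contingent tangent cone coincides with the weak sequential
tangent cone. -/
theorem tangent_eq_weakTangent_of_subamenable
    {X Y : Type*} [NormedAddCommGroup X] [NormedSpace ℝ X]
    [NormedAddCommGroup Y] [NormedSpace ℝ Y]
    (Ω : Set X) (xb : X) (hxb : xb ∈ Ω) (hΩcl : IsClosed Ω)
    (f : X → Y) (Θ : Set Y) (κ : ℝ) (U : Set X)
    (hU : U ∈ 𝓝 xb) (hf : ContDiffAt ℝ 1 f xb)
    (hΘcl : IsClosed Θ) (hΘconv : Convex ℝ Θ) (hfxb : f xb ∈ Θ) (hκ : 0 < κ)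
    (hrep : Ω ∩ U = {x ∈ U | f x ∈ Θ})
    (hsub : ∀ x ∈ U, infDist x Ω ≤ κ * infDist (f x) Θ) :
    contTangent Ω xb = weakTangent Ω xb :=
  tangent_eq_weakTangent_of_subamenable_general Ω xb hxb f Θ κ U hU hf hΘconv hfxb hrep hsub
end
end

section
/- Let Ω be a nonempty closed subset of a normed space X, let x̄ ∈ Ω, and let φ(·) := dist(·; Ω). If Ω is convex, then dφ(x̄)(u) = dist(u; T_Ω(x̄)) for all u ∈ X. Furthermore, for any closed set Ω (not necessarily convex), if the formula dφ(x̄)(u) = dist(u; T_Ω(x̄)) holds for all u ∈ X, then ∂⁻φ(x̄) = N⁻_Ω(x̄) ∩ B*, where B* is the closed unit ball of X*. -/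
open Filter Topology Set Metric Pointwise

noncomputable section

variable {E : Type*} [NormedAddCommGroup E] [NormedSpace ℝ E]

/-! Tangent directions `v = lim v_k` with `x + t_k v_k ∈ Ω` make the difference quotient of
`dist(·; Ω)` at `(t_k, u)` at most `‖u - v_k‖`, so `dφ(x)(u) ≤ dist(u; T_Ω(x))` for every `Ω`.
For convex `Ω`, each `(w - x) / t` with `w ∈ Ω` is tangent, whence
`t · dist(u; T_Ω(x)) ≤ dist(x + t u; Ω)`, the reverse inequality. Once the formula holds,
`v ∈ ∂⁻φ(x)` means `v ≤ dist(·; T_Ω(x))`, which, as `0 ∈ T_Ω(x)`, says exactly that `v ≤ 0`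
on `T_Ω(x)` and `‖v‖ ≤ 1`. -/

section DistanceFunction

variable {Ω : Set E} {x : E}

theorem zero_mem_contTangent (hx : x ∈ Ω) : (0 : E) ∈ contTangent Ω x :=
  ⟨fun k => 1 / (k + 1), fun _ => 0, fun _ => by positivity,
    tendsto_one_div_add_atTop_nhds_zero_nat, tendsto_const_nhds, fun _ => by simpa using hx⟩

theorem smul_mem_contTangent {u : E} (hu : u ∈ contTangent Ω x) {c : ℝ} (hc : 0 < c) :
    c • u ∈ contTangent Ω x := by
  obtain ⟨t, v, ht, ht0, hv, hmem⟩ := hu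
  refine ⟨fun k => t k / c, fun k => c • v k, fun k => div_pos (ht k) hc,
    by simpa using ht0.div_const c, hv.const_smul c, fun k => ?_⟩
  rw [smul_smul, div_mul_cancel₀ _ hc.ne']
  exact hmem k

theorem Convex.sub_mem_contTangent (hΩ : Convex ℝ Ω) (hx : x ∈ Ω) {w : E} (hw : w ∈ Ω) :
    w - x ∈ contTangent Ω x :=
  ⟨fun k => 1 / (k + 1), fun _ => w - x, fun _ => by positivity,
    tendsto_one_div_add_atTop_nhds_zero_nat, tendsto_const_nhds,
    fun _ => hΩ.add_smul_sub_mem hx hw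
      ⟨by positivity, (div_le_one (by positivity)).2 (by simp)⟩⟩

theorem infDist_add_smul_le_s11 {t : ℝ} (ht : 0 ≤ t) (u : E) {v : E} (hv : x + t • v ∈ Ω) :
    infDist (x + t • u) Ω ≤ t * dist u v :=
  calc infDist (x + t • u) Ω ≤ dist (x + t • u) (x + t • v) := infDist_le_dist_of_mem hv
    _ = t * dist u v := by rw [dist_add_left, dist_smul₀, Real.norm_of_nonneg ht]

theorem Convex.mul_infDist_contTangent_le (hΩ : Convex ℝ Ω) (hx : x ∈ Ω) {t : ℝ}
    (ht : 0 < t) (u : E) : t * infDist u (contTangent Ω x) ≤ infDist (x + t • u) Ω := by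
  refine (le_infDist ⟨x, hx⟩).2 fun w hw => ?_
  have hmem : t⁻¹ • (w - x) ∈ contTangent Ω x :=
    smul_mem_contTangent (hΩ.sub_mem_contTangent hx hw) (inv_pos.2 ht)
  calc t * infDist u (contTangent Ω x) ≤ t * dist u (t⁻¹ • (w - x)) := by
        gcongr; exact infDist_le_dist_of_mem hmem
    _ = dist (t • u) (t • t⁻¹ • (w - x)) := by rw [dist_smul₀, Real.norm_of_nonneg ht.le]
    _ = dist (x + t • u) w := by rw [smul_inv_smul₀ ht.ne', ← dist_add_left x, add_sub_cancel]

theorem diffQuot_infDist (hx : x ∈ Ω) (t : ℝ) (u : E) :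
    diffQuot (fun y => ((infDist y Ω : ℝ) : EReal)) x t u =
      ((t⁻¹ * infDist (x + t • u) Ω : ℝ) : EReal) := by
  simp [diffQuot, infDist_zero_of_mem hx, EReal.coe_mul]

theorem subDeriv_infDist_le_dist (hx : x ∈ Ω) (u : E) {v : E} (hv : v ∈ contTangent Ω x) :
    subDeriv (fun y => ((infDist y Ω : ℝ) : EReal)) x u ≤ dist u v := by
  obtain ⟨t, w, ht, ht0, hw, hmem⟩ := hv
  have hcurve : Tendsto (fun k => (t k, u)) atTop ((𝓝[>] 0) ×ˢ 𝓝 u) :=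
    (tendsto_nhdsWithin_of_tendsto_nhds_of_eventually_within _ ht0 (.of_forall ht)).prodMk
      tendsto_const_nhds
  have hbound :
      ∀ k, diffQuot (fun y => ((infDist y Ω : ℝ) : EReal)) x (t k) u ≤ dist u (w k) := by
    intro k
    rw [diffQuot_infDist hx, EReal.coe_le_coe_iff, inv_mul_le_iff₀ (ht k)]
    exact infDist_add_smul_le_s11 (ht k).le u (hmem k)
  calc subDeriv (fun y => ((infDist y Ω : ℝ) : EReal)) x u
      ≤ liminf (fun k => diffQuot (fun y => ((infDist y Ω : ℝ) : EReal)) x (t k) u) atTop :=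
        hcurve.liminf_le_liminf_comp
    _ ≤ liminf (fun k => (dist u (w k) : EReal)) atTop := liminf_le_liminf (.of_forall hbound)
    _ = dist u v :=
        ((continuous_coe_real_ereal.tendsto _).comp (tendsto_const_nhds.dist hw)).liminf_eq

theorem subDeriv_infDist_le (hx : x ∈ Ω) (u : E) :
    subDeriv (fun y => ((infDist y Ω : ℝ) : EReal)) x u ≤ infDist u (contTangent Ω x) := by
  refine EReal.le_of_forall_lt_iff_le.1 fun r hr => ?_
  obtain ⟨v, hv, hlt⟩ :=
    (infDist_lt_iff ⟨0, zero_mem_contTangent hx⟩).1 (EReal.coe_lt_coe_iff.1 hr)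
  exact (subDeriv_infDist_le_dist hx u hv).trans (EReal.coe_le_coe_iff.2 hlt.le)

theorem Convex.infDist_contTangent_le_subDeriv (hΩ : Convex ℝ Ω) (hx : x ∈ Ω) (u : E) :
    (infDist u (contTangent Ω x) : EReal) ≤
      subDeriv (fun y => ((infDist y Ω : ℝ) : EReal)) x u := by
  have hlim : Tendsto (fun p : ℝ × E => (infDist p.2 (contTangent Ω x) : EReal))
      ((𝓝[>] 0) ×ˢ 𝓝 u) (𝓝 (infDist u (contTangent Ω x))) :=
    (continuous_coe_real_ereal.tendsto _).comp
      (((continuous_infDist_pt _).tendsto u).comp tendsto_snd)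
  rw [← hlim.liminf_eq]
  refine liminf_le_liminf ?_
  filter_upwards [prod_mem_prod self_mem_nhdsWithin univ_mem] with p hp
  rw [diffQuot_infDist hx, EReal.coe_le_coe_iff, le_inv_mul_iff₀ hp.1]
  exact hΩ.mul_infDist_contTangent_le hx hp.1 p.2

theorem Convex.subDeriv_infDist (hΩ : Convex ℝ Ω) (hx : x ∈ Ω) (u : E) :
    subDeriv (fun y => ((infDist y Ω : ℝ) : EReal)) x u = infDist u (contTangent Ω x) :=
  le_antisymm (subDeriv_infDist_le hx u) (hΩ.infDist_contTangent_le_subDeriv hx u)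

end DistanceFunction

theorem forall_apply_le_infDist_iff {T : Set E} (hT : (0 : E) ∈ T) (v : E →L[ℝ] ℝ) :
    (∀ u, v u ≤ infDist u T) ↔ (∀ u ∈ T, v u ≤ 0) ∧ ‖v‖ ≤ 1 := by
  constructor
  · intro hv
    have hle : ∀ u, v u ≤ ‖u‖ := fun u =>
      (hv u).trans (by simpa using infDist_le_dist_of_mem hT (x := u))
    refine ⟨fun u hu => infDist_zero_of_mem hu ▸ hv u,
      v.opNorm_le_bound zero_le_one fun u => ?_⟩
    rw [one_mul, Real.norm_eq_abs, abs_le]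
    exact ⟨neg_le.1 (by simpa using hle (-u)), hle u⟩
  · rintro ⟨hN, hn⟩ u
    refine (le_infDist ⟨0, hT⟩).2 fun w hw => ?_
    calc v u = v w + v (u - w) := by simp
      _ ≤ 0 + 1 * ‖u - w‖ :=
          add_le_add (hN w hw) ((le_abs_self _).trans (v.le_of_opNorm_le hn (u - w)))
      _ = dist u w := by rw [zero_add, one_mul, dist_eq_norm]

theorem distance_function_subderivative_subdifferential_general
    {X : Type*} [NormedAddCommGroup X] [NormedSpace ℝ X]
    (Ω : Set X) (xb : X) (hxb : xb ∈ Ω) :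
    (Convex ℝ Ω →
      ∀ u : X, subDeriv (fun x => ((infDist x Ω : ℝ) : EReal)) xb u =
        ((infDist u (contTangent Ω xb) : ℝ) : EReal)) ∧
    ((∀ u : X, subDeriv (fun x => ((infDist x Ω : ℝ) : EReal)) xb u =
        ((infDist u (contTangent Ω xb) : ℝ) : EReal)) →
      subDiff (fun x => ((infDist x Ω : ℝ) : EReal)) xb =
        subNormal Ω xb ∩ {v : X →L[ℝ] ℝ | ‖v‖ ≤ 1}) := by
  refine ⟨fun hΩ => hΩ.subDeriv_infDist hxb, fun h => ?_⟩
  ext v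
  simp only [subDiff, h, EReal.coe_le_coe_iff]
  exact forall_apply_le_infDist_iff (zero_mem_contTangent hxb) v

/-- generalized differentiation of the distance function in normed
spaces: the subderivative formula for convex sets, and the subdifferential formula
for any closed set satisfying the subderivative formula. -/
theorem distance_function_subderivative_subdifferential
    {X : Type*} [NormedAddCommGroup X] [NormedSpace ℝ X]
    (Ω : Set X) (xb : X) (hne : Ω.Nonempty) (hcl : IsClosed Ω) (hxb : xb ∈ Ω) :
    (Convex ℝ Ω →
      ∀ u : X, subDeriv (fun x => ((infDist x Ω : ℝ) : EReal)) xb u =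
        ((infDist u (contTangent Ω xb) : ℝ) : EReal)) ∧
    ((∀ u : X, subDeriv (fun x => ((infDist x Ω : ℝ) : EReal)) xb u =
        ((infDist u (contTangent Ω xb) : ℝ) : EReal)) →
      subDiff (fun x => ((infDist x Ω : ℝ) : EReal)) xb =
        subNormal Ω xb ∩ {v : X →L[ℝ] ℝ | ‖v‖ ≤ 1}) :=
  distance_function_subderivative_subdifferential_general Ω xb hxb
end
end
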